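/- Let G be a finite simple connected graph with n ≥ 3 vertices. Then G induces a 4-periodic Grover walk if and only if the spectrum of its transition matrix T consists of the eigenvalue −1 with multiplicity 1, the eigenvalue 0 with multiplicity n − 2, and the eigenvalue 1 with multiplicity 1. -/

import Mathlib

/-!
Over the reals the Grover matrix factors as `U = (2P - 1) S`, where `S` reverses darts and
`P = B D⁻¹ Bᵀ` (with `B` the tail incidence matrix) is the orthogonal projection onto functions
of the tail of a dart. Hence `U² = (2P - 1)(2Q - 1)` with `Q = S P S` is a product of two
reflections, and `U⁴ = 1` iff `P` and `Q` commute. For Hermitian projections this happens iff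
`tr (PQ)² = tr PQ`, and since `Bᵀ S B` is the adjacency matrix `A`, cyclicity of the trace turns
this into `tr T⁴ = tr T²`. The matrix `T = D⁻¹ A` is similar to the symmetric `D^{-1/2} A D^{-1/2}`,
whose eigenvalues `λᵢ` lie in `[-1, 1]` (Gershgorin), so `∑ λᵢ⁴ = ∑ λᵢ²` says that every
`λᵢ ∈ {-1, 0, 1}`. Connectedness makes the eigenvalue `1` simple (the Laplacian has rank
`n - 1`), and `∑ λᵢ = tr T = 0` then leaves exactly one `-1`. Finally `U² ≠ 1` because a
connected graph on at least three vertices has two darts with the same tail, so `U⁴ = 1`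
already means period `4`.
-/

open Matrix SimpleGraph

/-- The Grover transfer matrix `U = U(G)` of a finite simple graph `G`, a `2m × 2m`
complex matrix indexed by the darts (symmetric arcs) of `G`.  For darts `e, f`,
`U e f = 2/deg(t(f)) - 1` if `f = e⁻¹`, `U e f = 2/deg(t(f))` if `t(f) = o(e)` and
`f ≠ e⁻¹`, and `U e f = 0` otherwise. -/
noncomputable def groverMatrix {V : Type*} [Fintype V] [DecidableEq V]
    (G : SimpleGraph V) [DecidableRel G.Adj] : Matrix G.Dart G.Dart ℂ :=
  fun e f =>
    if f = e.symm then 2 / (G.degree f.snd : ℂ) - 1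
    else if f.snd = e.fst then 2 / (G.degree f.snd : ℂ)
    else 0

/-- `G` induces a `k`-periodic Grover walk: `U ^ k = 1` and `U ^ j ≠ 1` for `1 ≤ j < k`. -/
def InducesPeriodicGroverWalk {V : Type*} [Fintype V] [DecidableEq V]
    (G : SimpleGraph V) [DecidableRel G.Adj] (k : ℕ) : Prop :=
  groverMatrix G ^ k = 1 ∧ ∀ j : ℕ, 1 ≤ j → j < k → groverMatrix G ^ j ≠ 1

/-- The transition matrix of the isotropic random walk on `G`:
`T u v = 1/deg(u)` if `u ∼ v` and `0` otherwise. -/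
noncomputable def transitionMatrix {V : Type*} [Fintype V]
    (G : SimpleGraph V) [DecidableRel G.Adj] : Matrix V V ℝ :=
  fun u v => if G.Adj u v then 1 / (G.degree u : ℝ) else 0

open Finset

lemma IsIdempotentElem.two_nsmul_sub_one_mul_self {A : Type*} [Ring A] {p : A}
    (hp : IsIdempotentElem p) : (2 • p - 1) * (2 • p - 1) = 1 := by
  have : (2 • p - 1) * (2 • p - 1) = 4 • (p * p) - 4 • p + 1 := by noncomm_ring
  rw [this, hp.eq, sub_self, zero_add]

lemma IsIdempotentElem.two_nsmul_sub_one_mul_eq_one_iff {A : Type*} [Ring A] [Algebra ℚ A]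
    {p q : A} (hp : IsIdempotentElem p) : (2 • p - 1) * (2 • q - 1) = 1 ↔ p = q := by
  refine ⟨fun h => ?_, fun h => h ▸ hp.two_nsmul_sub_one_mul_self⟩
  have h2 : 2 • q - 1 = 2 • p - 1 :=
    calc 2 • q - 1 = (2 • p - 1) * (2 • p - 1) * (2 • q - 1) := by
          rw [hp.two_nsmul_sub_one_mul_self, one_mul]
      _ = 2 • p - 1 := by rw [mul_assoc, h, mul_one]
  rw [sub_left_inj, ← Nat.cast_smul_eq_nsmul ℚ, ← Nat.cast_smul_eq_nsmul ℚ] at h2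
  exact (smul_right_injective A (by norm_num : ((2 : ℕ) : ℚ) ≠ 0) h2).symm

lemma mul_sq_eq_one_iff_commute {M : Type*} [Monoid M] {r s : M} (hr : r * r = 1)
    (hs : s * s = 1) : (r * s) ^ 2 = 1 ↔ Commute r s := by
  rw [sq]
  refine ⟨fun h => ?_, fun h => ?_⟩
  · calc r * s = r * (r * s * (r * s)) * s := by rw [h, mul_one]
      _ = s * r := by simp only [← mul_assoc, hr, one_mul]; rw [mul_assoc, hs, mul_one]
  · calc r * s * (r * s) = r * (s * r) * s := by simp only [mul_assoc]
      _ = 1 := by rw [← h.eq, ← mul_assoc, hr, one_mul, hs]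

lemma commute_two_nsmul_sub_one_iff {A : Type*} [Ring A] [Algebra ℚ A] {p q : A} :
    Commute (2 • p - 1) (2 • q - 1) ↔ Commute p q := by
  have h : (2 • p - 1) * (2 • q - 1) - (2 • q - 1) * (2 • p - 1) = (4 : ℚ) • (p * q - q * p) := by
    rw [show (4 : ℚ) = ((4 : ℕ) : ℚ) by norm_num, Nat.cast_smul_eq_nsmul]; noncomm_ring
  rw [commute_iff_eq, commute_iff_eq, ← sub_eq_zero, h, smul_eq_zero, sub_eq_zero]
  norm_num

lemma Matrix.mul_pow_mul_comm {m n R : Type*} [Fintype m] [Fintype n] [DecidableEq m]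
    [DecidableEq n] [Semiring R] (A : Matrix m n R) (B : Matrix n m R) (k : ℕ) :
    (A * B) ^ k * A = A * (B * A) ^ k := by
  induction k with
  | zero => rw [pow_zero, pow_zero, Matrix.one_mul, Matrix.mul_one]
  | succ k ih => rw [pow_succ, pow_succ, Matrix.mul_assoc, Matrix.mul_assoc, ← Matrix.mul_assoc _ A,
      ih, Matrix.mul_assoc]

lemma Matrix.trace_mul_pow_succ_comm {m n R : Type*} [Fintype m] [Fintype n] [DecidableEq m]
    [DecidableEq n] [CommSemiring R] (A : Matrix m n R) (B : Matrix n m R) (k : ℕ) :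
    ((A * B) ^ (k + 1)).trace = ((B * A) ^ (k + 1)).trace := by
  rw [pow_succ', Matrix.mul_assoc, trace_mul_comm, Matrix.mul_assoc, mul_pow_mul_comm,
    ← Matrix.mul_assoc, ← pow_succ']

open scoped ComplexOrder in
lemma Matrix.commute_iff_trace_mul_sq_eq {n 𝕜 : Type*} [Fintype n] [DecidableEq n] [RCLike 𝕜]
    {P Q : Matrix n n 𝕜} (hP : P.IsHermitian) (hQ : Q.IsHermitian) (hPP : IsIdempotentElem P)
    (hQQ : IsIdempotentElem Q) : Commute P Q ↔ ((P * Q) ^ 2).trace = (P * Q).trace := by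
  set X := P * Q - Q * P
  have hXX : Xᴴ * X = Q * (P * P) * Q + P * (Q * Q) * P - Q * P * Q * P - (P * Q) ^ 2 := by
    simp only [X, conjTranspose_sub, conjTranspose_mul, hP.eq, hQ.eq]; noncomm_ring
  have htrace : (Xᴴ * X).trace = 2 * ((P * Q).trace - ((P * Q) ^ 2).trace) := by
    rw [hXX, hPP.eq, hQQ.eq, trace_sub, trace_sub, trace_add, trace_mul_cycle Q P Q,
      trace_mul_cycle P Q P, hQQ.eq, hPP.eq, trace_mul_comm Q P, trace_mul_comm (Q * P * Q) P]
    simp only [sq, ← mul_assoc]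
    ring
  rw [commute_iff_eq, ← sub_eq_zero (a := P * Q), ← trace_conjTranspose_mul_self_eq_zero_iff,
    htrace, mul_eq_zero, sub_eq_zero]
  simp [eq_comm]

lemma Matrix.IsHermitian.trace_pow {n 𝕜 : Type*} [Fintype n] [DecidableEq n] [RCLike 𝕜]
    {A : Matrix n n 𝕜} (hA : A.IsHermitian) (k : ℕ) :
    (A ^ k).trace = ∑ i, (hA.eigenvalues i : 𝕜) ^ k := by
  conv_lhs => rw [hA.spectral_theorem, ← map_pow, Unitary.conjStarAlgAut_apply, trace_mul_cycle,
    Unitary.coe_star_mul_self, Matrix.one_mul]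
  simp [diagonal_pow, trace_diagonal]

lemma Matrix.IsHermitian.rank_sub_smul_one {n 𝕜 : Type*} [Fintype n] [DecidableEq n] [RCLike 𝕜]
    {A : Matrix n n 𝕜} (hA : A.IsHermitian) (μ : ℝ) :
    (A - (μ : 𝕜) • 1).rank = Fintype.card {i // hA.eigenvalues i ≠ μ} := by
  have : A - (μ : 𝕜) • 1 = Unitary.conjStarAlgAut 𝕜 _ hA.eigenvectorUnitary
      (diagonal fun i => ((hA.eigenvalues i - μ : ℝ) : 𝕜)) := by
    conv_lhs => rw [hA.spectral_theorem]
    rw [← map_one (Unitary.conjStarAlgAut 𝕜 _ hA.eigenvectorUnitary), ← map_smul, ← map_sub]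
    congr 1
    ext i j
    rw [sub_apply, smul_apply, one_apply, diagonal_apply, diagonal_apply]
    split_ifs <;> simp
  rw [this, Unitary.conjStarAlgAut_apply, ← Unitary.coe_star]
  simp [-isUnit_iff_ne_zero, -Unitary.coe_star, rank_diagonal, sub_eq_zero]

lemma Matrix.norm_le_of_hasEigenvalue {n K : Type*} [Fintype n] [DecidableEq n] [NormedField K]
    {A : Matrix n n K} {r : ℝ} (hA : ∀ i, ∑ j, ‖A i j‖ ≤ r) {μ : K}
    (hμ : Module.End.HasEigenvalue (toLin' A) μ) : ‖μ‖ ≤ r := by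
  obtain ⟨k, hk⟩ := eigenvalue_mem_ball hμ
  rw [Metric.mem_closedBall, dist_eq_norm] at hk
  calc ‖μ‖ ≤ ‖A k k‖ + ‖μ - A k k‖ := norm_le_insert' μ (A k k)
    _ ≤ ‖A k k‖ + ∑ j ∈ univ.erase k, ‖A k j‖ := by gcongr
    _ = ∑ j, ‖A k j‖ := add_sum_erase _ (fun j => ‖A k j‖) (mem_univ k)
    _ ≤ r := hA k

lemma pow_four_le_sq_of_abs_le_one {x : ℝ} (hx : |x| ≤ 1) : x ^ 4 ≤ x ^ 2 :=
  calc x ^ 4 = (x ^ 2) ^ 2 := by ring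
    _ ≤ x ^ 2 := pow_le_of_le_one (sq_nonneg x) ((sq_le_one_iff_abs_le_one x).mpr hx) two_ne_zero

lemma pow_four_eq_sq_iff {x : ℝ} : x ^ 4 = x ^ 2 ↔ x = -1 ∨ x = 0 ∨ x = 1 := by
  constructor
  · intro h
    have : x ^ 2 * ((x + 1) * (x - 1)) = 0 := by linear_combination h
    rcases mul_eq_zero.mp this with h0 | h1
    · exact Or.inr (Or.inl (pow_eq_zero_iff two_ne_zero |>.mp h0))
    · rcases mul_eq_zero.mp h1 with h | h
      · exact Or.inl (by linarith)
      · exact Or.inr (Or.inr (by linarith))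
  · rintro (rfl | rfl | rfl) <;> norm_num

section

open Polynomial

lemma prod_X_sub_C_eq_of_forall_eq_neg_one_or_zero_or_one {ι : Type*} [Fintype ι] {μ : ι → ℝ}
    (h : ∀ i, μ i = -1 ∨ μ i = 0 ∨ μ i = 1) :
    ∏ i, (X - C (μ i)) =
      (X - C (-1)) ^ #{i | μ i = -1} * (X - C 1) ^ #{i | μ i = 1} * X ^ #{i | μ i = 0} := by
  simp only [card_filter, ← prod_pow_eq_pow_sum, ← prod_mul_distrib]
  refine prod_congr rfl fun i _ => ?_
  rcases h i with h | h | h <;> norm_num [h]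

lemma sum_pow_four_eq_sum_sq_iff_prod_X_sub_C_eq {ι : Type*} [Fintype ι] {μ : ι → ℝ}
    (hμ : ∀ i, |μ i| ≤ 1) (hsum : ∑ i, μ i = 0) (hone : #{i | μ i = 1} = 1) :
    ∑ i, μ i ^ 4 = ∑ i, μ i ^ 2 ↔
      ∏ i, (X - C (μ i)) = (X - C (-1)) * (X - C 1) * X ^ (Fintype.card ι - 2) := by
  rw [sum_eq_sum_iff_of_le fun i _ => pow_four_le_sq_of_abs_le_one (hμ i)]
  simp only [mem_univ, true_implies, pow_four_eq_sq_iff]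
  constructor
  · intro h
    have hcard : #{i | μ i = -1} + #{i | μ i = 1} + #{i | μ i = 0} = Fintype.card ι := by
      rw [card_filter, card_filter, card_filter, ← sum_add_distrib, ← sum_add_distrib, ← card_univ,
        card_eq_sum_ones]
      exact sum_congr rfl fun i _ => by rcases h i with h | h | h <;> norm_num [h]
    have hneg : (#{i | μ i = 1} : ℝ) = #{i | μ i = -1} := by
      rw [← sub_eq_zero, ← hsum]
      simp only [card_filter, Nat.cast_sum, Nat.cast_ite, Nat.cast_one, Nat.cast_zero,
        ← sum_sub_distrib]
      exact sum_congr rfl fun i _ => by rcases h i with h | h | h <;> norm_num [h]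
    rw [hone, Nat.cast_one, eq_comm, Nat.cast_eq_one] at hneg
    rw [prod_X_sub_C_eq_of_forall_eq_neg_one_or_zero_or_one h, hneg, hone, pow_one, pow_one]
    congr 2
    omega
  · intro h i
    have hroot : (∏ j, (X - C (μ j))).IsRoot (μ i) := by
      rw [IsRoot, eval_prod, prod_eq_zero_iff]
      exact ⟨i, mem_univ i, by simp⟩
    rw [h] at hroot
    simp only [IsRoot, eval_mul, eval_pow, eval_sub, eval_X, eval_C, mul_eq_zero, sub_eq_zero,
      pow_eq_zero_iff', ne_eq] at hroot
    tauto

end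

lemma SimpleGraph.Connected.exists_adj_adj_ne {V : Type*} [Fintype V] [DecidableEq V]
    {G : SimpleGraph V} (hG : G.Connected) (hn : 3 ≤ Fintype.card V) :
    ∃ x y z, G.Adj x y ∧ G.Adj x z ∧ y ≠ z := by
  have : Nontrivial V := Fintype.one_lt_card_iff_nontrivial.mp (by omega)
  obtain ⟨u⟩ := hG.nonempty
  obtain ⟨v, huv⟩ := hG.preconnected.exists_adj_of_nontrivial u
  obtain ⟨w, -, hw⟩ := exists_mem_notMem_of_card_lt_card (s := {u, v}) (t := univ)
    (by rw [card_univ]; exact (card_le_two).trans_lt (by omega))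
  obtain ⟨p⟩ := hG.preconnected u w
  obtain ⟨d, -, hd₁, hd₂⟩ := p.exists_boundary_dart {u, v} (by simp) (by simpa using hw)
  simp only [Set.mem_insert_iff, Set.mem_singleton_iff, not_or] at hd₁ hd₂
  rcases hd₁ with h | h
  · exact ⟨u, v, d.snd, huv, h ▸ d.adj, Ne.symm hd₂.2⟩
  · exact ⟨v, u, d.snd, huv.symm, h ▸ d.adj, Ne.symm hd₂.1⟩

lemma SimpleGraph.Connected.rank_lapMatrix {V : Type*} [Fintype V] [DecidableEq V]
    {G : SimpleGraph V} [DecidableRel G.Adj] (hG : G.Connected) :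
    (G.lapMatrix ℝ).rank = Fintype.card V - 1 := by
  have hcard : Fintype.card G.ConnectedComponent = 1 := by
    have := hG.preconnected.subsingleton_connectedComponent
    obtain ⟨v⟩ := hG.nonempty
    exact Fintype.card_eq_one_iff.mpr ⟨G.connectedComponentMk v, fun _ => Subsingleton.elim _ _⟩
  have := LinearMap.finrank_range_add_finrank_ker (toLin' (G.lapMatrix ℝ))
  rw [← G.card_connectedComponent_eq_finrank_ker_toLin'_lapMatrix, hcard,
    Module.finrank_fintype_fun_eq_card, toLin'_apply'] at this
  rw [Matrix.rank]
  omega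

lemma SimpleGraph.sum_abs_transitionMatrix_le_one {V : Type*} [Fintype V] (G : SimpleGraph V)
    [DecidableRel G.Adj] (u : V) : ∑ v, |transitionMatrix G u v| ≤ 1 := by
  simp only [transitionMatrix, apply_ite, abs_zero, sum_ite, sum_const_zero, add_zero, sum_const,
    ← neighborFinset_eq_filter, card_neighborFinset_eq_degree, nsmul_eq_mul]
  rw [abs_of_nonneg (by positivity), mul_one_div]
  exact div_self_le_one _

namespace SimpleGraph

variable {V : Type*} [Fintype V] [DecidableEq V] (G : SimpleGraph V) [DecidableRel G.Adj]

lemma card_dart_fst_snd_eq_ite (u v : V) :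
    #{e : G.Dart | e.fst = u ∧ e.snd = v} = if G.Adj u v then 1 else 0 := by
  split_ifs with h
  · rw [card_eq_one]
    exact ⟨⟨(u, v), h⟩, by ext e; simp [Dart.ext_iff, Prod.ext_iff]⟩
  · rw [card_eq_zero, filter_eq_empty_iff]
    rintro e - ⟨rfl, rfl⟩
    exact h e.adj

section Incidence

variable (R : Type*) [Semiring R]

def dartTailMatrix : Matrix G.Dart V R := of fun e v => if e.fst = v then 1 else 0

def dartSymmMatrix : Matrix G.Dart G.Dart R := of fun e f => if e.symm = f then 1 else 0

variable {G R}

lemma dartSymmMatrix_mul_apply {α : Type*} (N : Matrix G.Dart α R) (e : G.Dart) (x : α) :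
    (G.dartSymmMatrix R * N) e x = N e.symm x := by
  simp [dartSymmMatrix, mul_apply]

lemma mul_dartSymmMatrix_apply {α : Type*} (M : Matrix α G.Dart R) (x : α) (f : G.Dart) :
    (M * G.dartSymmMatrix R) x f = M x f.symm := by
  simp [dartSymmMatrix, mul_apply, Dart.symm_involutive.eq_iff]

variable (G R)

lemma dartSymmMatrix_mul_self : G.dartSymmMatrix R * G.dartSymmMatrix R = 1 := by
  ext e f
  rw [dartSymmMatrix_mul_apply]
  simp [dartSymmMatrix, one_apply]

lemma transpose_dartTailMatrix_mul_self :
    (G.dartTailMatrix R)ᵀ * G.dartTailMatrix R = G.degMatrix R := by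
  ext u v
  simp only [mul_apply, transpose_apply, dartTailMatrix, of_apply, mul_ite, mul_one, mul_zero,
    ← ite_and, sum_boole, degMatrix, diagonal_apply]
  split_ifs with huv
  · subst huv
    simp [dart_fst_fiber_card_eq_degree]
  · rw [filter_eq_empty_iff.mpr (by rintro e - ⟨rfl, rfl⟩; exact huv rfl), card_empty,
      Nat.cast_zero]

lemma transpose_dartTailMatrix_mul_dartSymmMatrix_mul_dartTailMatrix :
    (G.dartTailMatrix R)ᵀ * G.dartSymmMatrix R * G.dartTailMatrix R = G.adjMatrix R := by
  rw [Matrix.mul_assoc]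
  ext u v
  rw [mul_apply]
  simp only [dartSymmMatrix_mul_apply, transpose_apply, dartTailMatrix, of_apply, mul_ite,
    mul_one, mul_zero, ← ite_and, sum_boole, adjMatrix_apply, Dart.symm_toProd, Prod.fst_swap,
    and_comm (a := _ = v), card_dart_fst_snd_eq_ite, Nat.cast_ite, Nat.cast_one, Nat.cast_zero]

end Incidence

section Grover

variable (K : Type*) [Field K]

def invDegMatrix : Matrix V V K := diagonal fun v => (G.degree v : K)⁻¹

def dartTailProjection : Matrix G.Dart G.Dart K :=
  G.dartTailMatrix K * G.invDegMatrix K * (G.dartTailMatrix K)ᵀ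

def dartHeadProjection : Matrix G.Dart G.Dart K :=
  G.dartSymmMatrix K * G.dartTailProjection K * G.dartSymmMatrix K

def groverOperator : Matrix G.Dart G.Dart K :=
  (2 • G.dartTailProjection K - 1) * G.dartSymmMatrix K

variable {G K}

lemma dartTailProjection_apply (e f : G.Dart) :
    G.dartTailProjection K e f = if e.fst = f.fst then (G.degree f.fst : K)⁻¹ else 0 := by
  simp [dartTailProjection, invDegMatrix, dartTailMatrix, mul_apply, diagonal, eq_comm]

lemma dartHeadProjection_apply (e f : G.Dart) :
    G.dartHeadProjection K e f = if e.snd = f.snd then (G.degree f.snd : K)⁻¹ else 0 := by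
  rw [dartHeadProjection, mul_dartSymmMatrix_apply, dartSymmMatrix_mul_apply,
    dartTailProjection_apply]
  rfl

lemma groverOperator_apply (e f : G.Dart) :
    G.groverOperator K e f =
      if f = e.symm then 2 / (G.degree f.snd : K) - 1
      else if f.snd = e.fst then 2 / (G.degree f.snd : K) else 0 := by
  have hsymm : e = f.symm ↔ f = e.symm := by
    rw [← Dart.symm_involutive.eq_iff, eq_comm]
  rw [groverOperator, mul_dartSymmMatrix_apply, Matrix.sub_apply, Matrix.smul_apply, one_apply,
    dartTailProjection_apply, Dart.symm_toProd, Prod.fst_swap, if_congr hsymm rfl rfl,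
    nsmul_eq_mul, Nat.cast_ofNat]
  by_cases hf : f = e.symm
  · simp [hf, div_eq_mul_inv]
  · by_cases hfe : f.snd = e.fst
    · simp [hf, hfe, div_eq_mul_inv]
    · simp [hf, hfe, Ne.symm hfe]

variable (G K)

lemma invDegMatrix_mul_degMatrix [CharZero K] (hd : ∀ v, 0 < G.degree v) :
    G.invDegMatrix K * G.degMatrix K = 1 := by
  rw [invDegMatrix, degMatrix, diagonal_mul_diagonal, ← diagonal_one]
  exact congrArg diagonal (funext fun v => inv_mul_cancel₀ (Nat.cast_ne_zero.mpr (hd v).ne'))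

lemma isIdempotentElem_dartTailProjection [CharZero K] (hd : ∀ v, 0 < G.degree v) :
    IsIdempotentElem (G.dartTailProjection K) := by
  rw [IsIdempotentElem, dartTailProjection]
  calc _ = G.dartTailMatrix K * (G.invDegMatrix K * ((G.dartTailMatrix K)ᵀ * G.dartTailMatrix K))
        * G.invDegMatrix K * (G.dartTailMatrix K)ᵀ := by simp only [Matrix.mul_assoc]
    _ = _ := by rw [transpose_dartTailMatrix_mul_self, invDegMatrix_mul_degMatrix G K hd,
      Matrix.mul_one]

lemma isIdempotentElem_dartHeadProjection [CharZero K] (hd : ∀ v, 0 < G.degree v) :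
    IsIdempotentElem (G.dartHeadProjection K) := by
  have hP := (isIdempotentElem_dartTailProjection G K hd).eq
  rw [IsIdempotentElem, dartHeadProjection]
  simp only [Matrix.mul_assoc]
  rw [← Matrix.mul_assoc (G.dartSymmMatrix K) (G.dartSymmMatrix K), dartSymmMatrix_mul_self,
    Matrix.one_mul, ← Matrix.mul_assoc (G.dartTailProjection K) (G.dartTailProjection K), hP]

lemma groverOperator_sq : G.groverOperator K ^ 2 =
    (2 • G.dartTailProjection K - 1) * (2 • G.dartHeadProjection K - 1) := by
  have hS : G.dartSymmMatrix K * (2 • G.dartTailProjection K - 1) * G.dartSymmMatrix K =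
      2 • G.dartHeadProjection K - 1 := by
    rw [Matrix.mul_sub, Matrix.sub_mul, Matrix.mul_smul, Matrix.smul_mul, Matrix.mul_one,
      dartSymmMatrix_mul_self, dartHeadProjection]
  rw [sq, groverOperator, ← hS]
  simp only [Matrix.mul_assoc]

lemma groverOperator_pow_four_eq_one_iff [CharZero K] (hd : ∀ v, 0 < G.degree v) :
    G.groverOperator K ^ 4 = 1 ↔ Commute (G.dartTailProjection K) (G.dartHeadProjection K) := by
  have hP := (isIdempotentElem_dartTailProjection G K hd).two_nsmul_sub_one_mul_self
  have hQ := (isIdempotentElem_dartHeadProjection G K hd).two_nsmul_sub_one_mul_self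
  rw [show 4 = 2 * 2 from rfl, pow_mul, groverOperator_sq, mul_sq_eq_one_iff_commute hP hQ,
    commute_two_nsmul_sub_one_iff]

lemma groverOperator_sq_ne_one [CharZero K] (hd : ∀ v, 0 < G.degree v) {x y z : V}
    (hy : G.Adj x y) (hz : G.Adj x z) (hyz : y ≠ z) : G.groverOperator K ^ 2 ≠ 1 := by
  rw [groverOperator_sq, Ne,
    (isIdempotentElem_dartTailProjection G K hd).two_nsmul_sub_one_mul_eq_one_iff]
  intro h
  have hentry := congr_fun₂ h ⟨(x, y), hy⟩ ⟨(x, z), hz⟩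
  simp only [dartTailProjection_apply, ↓reduceIte, dartHeadProjection_apply, hyz, inv_eq_zero,
    Nat.cast_eq_zero] at hentry
  exact (hd x).ne' hentry

lemma isHermitian_dartTailProjection [StarRing K] : (G.dartTailProjection K).IsHermitian := by
  ext e f
  simp only [conjTranspose_apply, dartTailProjection_apply]
  by_cases h : e.fst = f.fst
  · rw [h]; simp
  · simp [h, Ne.symm h]

lemma isHermitian_dartHeadProjection [StarRing K] : (G.dartHeadProjection K).IsHermitian := by
  ext e f
  simp only [conjTranspose_apply, dartHeadProjection_apply]
  by_cases h : e.snd = f.snd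
  · rw [h]; simp
  · simp [h, Ne.symm h]

lemma trace_dartTailProjection_mul_dartHeadProjection_pow (k : ℕ) :
    ((G.dartTailProjection K * G.dartHeadProjection K) ^ (k + 1)).trace =
      ((G.invDegMatrix K * G.adjMatrix K) ^ (2 * (k + 1))).trace := by
  obtain ⟨Y, hPQ, hYA⟩ : ∃ Y, G.dartTailProjection K * G.dartHeadProjection K =
      G.dartTailMatrix K * Y ∧ Y * G.dartTailMatrix K = (G.invDegMatrix K * G.adjMatrix K) ^ 2 :=
    ⟨G.invDegMatrix K * (G.dartTailMatrix K)ᵀ * G.dartSymmMatrix K * G.dartTailMatrix K *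
      G.invDegMatrix K * (G.dartTailMatrix K)ᵀ * G.dartSymmMatrix K,
      by simp only [dartTailProjection, dartHeadProjection, Matrix.mul_assoc],
      by rw [sq, ← transpose_dartTailMatrix_mul_dartSymmMatrix_mul_dartTailMatrix]
         simp only [Matrix.mul_assoc]⟩
  rw [hPQ, Matrix.trace_mul_pow_succ_comm, hYA, ← pow_mul]

end Grover

section Spectrum

open Polynomial

noncomputable def normalizedAdjMatrix : Matrix V V ℝ :=
  diagonal (fun v => (√(G.degree v : ℝ))⁻¹) * G.adjMatrix ℝ *
    diagonal (fun v => (√(G.degree v : ℝ))⁻¹)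

lemma isHermitian_normalizedAdjMatrix : G.normalizedAdjMatrix.IsHermitian := by
  rw [IsHermitian, normalizedAdjMatrix, conjTranspose_mul, conjTranspose_mul,
    diagonal_conjTranspose, (G.isHermitian_adjMatrix (R := ℝ)).eq, Matrix.mul_assoc, star_trivial]

noncomputable def invSqrtDegUnit (hd : ∀ v, 0 < G.degree v) : (Matrix V V ℝ)ˣ where
  val := diagonal fun v => (√(G.degree v : ℝ))⁻¹
  inv := diagonal fun v => √(G.degree v : ℝ)
  val_inv := by
    rw [diagonal_mul_diagonal, ← diagonal_one]
    exact congrArg diagonal (funext fun v => inv_mul_cancel₀ (by have := hd v; positivity))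
  inv_val := by
    rw [diagonal_mul_diagonal, ← diagonal_one]
    exact congrArg diagonal (funext fun v => mul_inv_cancel₀ (by have := hd v; positivity))

variable {G}

lemma transitionMatrix_eq_units_conj (hd : ∀ v, 0 < G.degree v) :
    transitionMatrix G =
      (G.invSqrtDegUnit hd : Matrix V V ℝ) * G.normalizedAdjMatrix *
        (↑(G.invSqrtDegUnit hd)⁻¹ : Matrix V V ℝ) := by
  ext x y
  simp only [invSqrtDegUnit, normalizedAdjMatrix, Units.inv_mk, diagonal_mul, mul_diagonal,
    transitionMatrix, adjMatrix_apply]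
  have hy : √(G.degree y : ℝ) ≠ 0 := (Real.sqrt_pos.mpr (by exact_mod_cast hd y)).ne'
  split_ifs
  · rw [mul_one, mul_assoc, mul_assoc, inv_mul_cancel₀ hy, mul_one, ← mul_inv,
      Real.mul_self_sqrt (Nat.cast_nonneg _), one_div]
  · simp

lemma charpoly_transitionMatrix (hd : ∀ v, 0 < G.degree v) :
    (transitionMatrix G).charpoly =
      ∏ i, (X - C (G.isHermitian_normalizedAdjMatrix.eigenvalues i)) := by
  rw [transitionMatrix_eq_units_conj hd, charpoly_mul_comm, ← Matrix.mul_assoc, Units.inv_mul,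
    Matrix.one_mul, G.isHermitian_normalizedAdjMatrix.charpoly_eq]
  simp

lemma trace_transitionMatrix_pow (hd : ∀ v, 0 < G.degree v) (k : ℕ) :
    (transitionMatrix G ^ k).trace = ∑ i, G.isHermitian_normalizedAdjMatrix.eigenvalues i ^ k := by
  rw [transitionMatrix_eq_units_conj hd, Units.conj_pow, trace_mul_cycle, Units.inv_mul,
    Matrix.one_mul, G.isHermitian_normalizedAdjMatrix.trace_pow]
  simp

lemma abs_eigenvalues_normalizedAdjMatrix_le_one (hd : ∀ v, 0 < G.degree v) (i : V) :
    |G.isHermitian_normalizedAdjMatrix.eigenvalues i| ≤ 1 := by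
  have hroot :
      (transitionMatrix G).charpoly.IsRoot (G.isHermitian_normalizedAdjMatrix.eigenvalues i) := by
    rw [charpoly_transitionMatrix hd, IsRoot, eval_prod, prod_eq_zero_iff]
    exact ⟨i, mem_univ i, by simp⟩
  rw [← charpoly_toLin', ← Module.End.hasEigenvalue_iff_isRoot_charpoly] at hroot
  exact norm_le_of_hasEigenvalue (by simpa using G.sum_abs_transitionMatrix_le_one) hroot

lemma sum_eigenvalues_normalizedAdjMatrix :
    ∑ i, G.isHermitian_normalizedAdjMatrix.eigenvalues i = 0 := by
  have := G.isHermitian_normalizedAdjMatrix.trace_eq_sum_eigenvalues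
  simp only [Matrix.trace, Matrix.diag, normalizedAdjMatrix, mul_diagonal, diagonal_mul,
    adjMatrix_apply, G.irrefl, if_false, mul_zero, zero_mul, sum_const_zero] at this
  exact this.symm

lemma transitionMatrix_eq_invDegMatrix_mul_adjMatrix :
    transitionMatrix G = G.invDegMatrix ℝ * G.adjMatrix ℝ := by
  ext u v
  rw [invDegMatrix, diagonal_mul, adjMatrix_apply, mul_ite, mul_one, mul_zero, ← one_div]
  rfl

lemma rank_transitionMatrix_sub_one (hd : ∀ v, 0 < G.degree v) :
    (transitionMatrix G - 1).rank = (G.lapMatrix ℝ).rank := by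
  have hT : transitionMatrix G - 1 = -G.invDegMatrix ℝ * G.lapMatrix ℝ := by
    rw [transitionMatrix_eq_invDegMatrix_mul_adjMatrix, lapMatrix, Matrix.neg_mul, Matrix.mul_sub,
      invDegMatrix_mul_degMatrix G ℝ hd]
    abel
  have hE : IsUnit (-G.invDegMatrix ℝ).det := isUnit_det_of_right_inverse (B := -G.degMatrix ℝ)
    (by rw [neg_mul_neg, invDegMatrix_mul_degMatrix G ℝ hd])
  rw [hT, rank_mul_eq_right_of_isUnit_det _ _ hE]

lemma card_eigenvalues_normalizedAdjMatrix_eq_one (hG : G.Connected) (hd : ∀ v, 0 < G.degree v) :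
    #{i | G.isHermitian_normalizedAdjMatrix.eigenvalues i = 1} = 1 := by
  set u := G.invSqrtDegUnit hd
  have hconj : transitionMatrix G - 1 =
      (u : Matrix V V ℝ) * (G.normalizedAdjMatrix - 1) * (↑u⁻¹ : Matrix V V ℝ) := by
    rw [transitionMatrix_eq_units_conj hd, Matrix.mul_sub, Matrix.sub_mul, Matrix.mul_one,
      Units.mul_inv]
  have hrank : Fintype.card {i // G.isHermitian_normalizedAdjMatrix.eigenvalues i ≠ 1} =
      Fintype.card V - 1 := by
    rw [← G.isHermitian_normalizedAdjMatrix.rank_sub_smul_one, ← hG.rank_lapMatrix,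
      ← rank_transitionMatrix_sub_one hd, hconj,
      rank_mul_eq_left_of_isUnit_det _ _ ((isUnit_iff_isUnit_det _).mp u⁻¹.isUnit),
      rank_mul_eq_right_of_isUnit_det _ _ ((isUnit_iff_isUnit_det _).mp u.isUnit)]
    simp
  have hsplit := card_filter_add_card_filter_not (s := univ)
    (fun i => G.isHermitian_normalizedAdjMatrix.eigenvalues i = 1)
  have hpos : 0 < Fintype.card V := Fintype.card_pos_iff.mpr hG.nonempty
  rw [Fintype.card_subtype] at hrank
  simp only [ne_eq] at hrank
  rw [card_univ] at hsplit
  omega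

lemma groverOperator_pow_four_eq_one_iff_trace_transitionMatrix (hd : ∀ v, 0 < G.degree v) :
    G.groverOperator ℝ ^ 4 = 1 ↔
      (transitionMatrix G ^ 4).trace = (transitionMatrix G ^ 2).trace := by
  have h₁ := trace_dartTailProjection_mul_dartHeadProjection_pow G ℝ 1
  have h₀ := trace_dartTailProjection_mul_dartHeadProjection_pow G ℝ 0
  rw [zero_add, pow_one] at h₀
  rw [groverOperator_pow_four_eq_one_iff G ℝ hd,
    commute_iff_trace_mul_sq_eq (isHermitian_dartTailProjection G ℝ)
      (isHermitian_dartHeadProjection G ℝ) (isIdempotentElem_dartTailProjection G ℝ hd)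
      (isIdempotentElem_dartHeadProjection G ℝ hd),
    h₀, h₁, transitionMatrix_eq_invDegMatrix_mul_adjMatrix]

end Spectrum

end SimpleGraph

section GroverWalk

variable {V : Type*} [Fintype V] [DecidableEq V] (G : SimpleGraph V) [DecidableRel G.Adj]

lemma groverMatrix_eq_mapMatrix :
    groverMatrix G = (algebraMap ℝ ℂ).mapMatrix (G.groverOperator ℝ) := by
  ext e f
  rw [RingHom.mapMatrix_apply, map_apply, groverOperator_apply]
  unfold groverMatrix
  split_ifs <;> simp

lemma groverMatrix_pow_eq_one_iff (k : ℕ) :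
    groverMatrix G ^ k = 1 ↔ G.groverOperator ℝ ^ k = 1 := by
  rw [groverMatrix_eq_mapMatrix, ← map_pow,
    map_eq_one_iff _ (map_injective (algebraMap ℝ ℂ).injective)]

lemma inducesPeriodicGroverWalk_iff_orderOf {k : ℕ} (hk : 0 < k) :
    InducesPeriodicGroverWalk G k ↔ orderOf (groverMatrix G) = k := by
  rw [orderOf_eq_iff hk, InducesPeriodicGroverWalk]
  exact and_congr_right' ⟨fun h m hmk hm => h m hm hmk, fun h j hj hjk => h j hjk hj⟩

end GroverWalk

lemma orderOf_eq_four_iff {M : Type*} [Monoid M] {x : M} (hx : x ^ 2 ≠ 1) :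
    orderOf x = 4 ↔ x ^ 4 = 1 :=
  ⟨fun h => h ▸ pow_orderOf_eq_one x, orderOf_eq_prime_pow (p := 2) (n := 1) (by simpa using hx)⟩

open Polynomial in
/-- **Lemma 4.2.** A finite simple connected graph `G` with `n ≥ 3`
vertices induces a `4`-periodic Grover walk iff the spectrum of its transition matrix `T`
consists of `-1` with multiplicity `1`, `0` with multiplicity `n - 2`, and `1` with
multiplicity `1`.  Since `T` is diagonalizable, this spectral condition (with
multiplicities) is expressed by its characteristic polynomial. -/
theorem four_periodic_iff_transition_charpoly {V : Type*} [Fintype V] [DecidableEq V]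
    (G : SimpleGraph V) [DecidableRel G.Adj] (hG : G.Connected)
    (hn : 3 ≤ Fintype.card V) :
    InducesPeriodicGroverWalk G 4 ↔
      (transitionMatrix G).charpoly =
        (X - C (-1)) * (X - C 1) * X ^ (Fintype.card V - 2) := by
  have : Nontrivial V := Fintype.one_lt_card_iff_nontrivial.mp (by omega)
  have hd : ∀ v, 0 < G.degree v := fun v => hG.preconnected.degree_pos_of_nontrivial v
  obtain ⟨x, y, z, hy, hz, hyz⟩ := hG.exists_adj_adj_ne hn
  have hU₂ : groverMatrix G ^ 2 ≠ 1 := by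
    rw [Ne, groverMatrix_pow_eq_one_iff]
    exact groverOperator_sq_ne_one G ℝ hd hy hz hyz
  rw [inducesPeriodicGroverWalk_iff_orderOf G four_pos, orderOf_eq_four_iff hU₂,
    groverMatrix_pow_eq_one_iff, groverOperator_pow_four_eq_one_iff_trace_transitionMatrix hd,
    trace_transitionMatrix_pow hd, trace_transitionMatrix_pow hd, charpoly_transitionMatrix hd]
  exact sum_pow_four_eq_sum_sq_iff_prod_X_sub_C_eq (abs_eigenvalues_normalizedAdjMatrix_le_one hd)
    G.sum_eigenvalues_normalizedAdjMatrix (card_eigenvalues_normalizedAdjMatrix_eq_one hG hd)
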